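/- arXiv:2002.05023 — 6 statements merged into one kernel-verified Lean document; each statement's English description precedes it below -/
import Mathlib

section
/- If A is a real n×n matrix with spectral radius strictly less than 1, then for any symmetric n×n matrix W the series ∑_{j=0}^∞ (Aᵀ)^j W A^j converges, and its limit X is the unique symmetric solution of the discrete Lyapunov equation AᵀXA + W = X. -/
/-!
By Gelfand's formula, `ρ(A) < 1` gives some `r < 1` with `‖A ^ j‖ ≤ r ^ j` for large `j`, so the
terms `(Aᵀ) ^ j * W * A ^ j` are dominated by `‖W‖ * (r ^ 2) ^ j` and the series converges
absolutely. Multiplying the series by `Aᵀ` on the left and `A` on the right shifts its index, which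
turns its sum into a solution of the Lyapunov equation. The difference `D` of two solutions
satisfies `D = (Aᵀ) ^ k * D * A ^ k` for every `k`, and the right-hand side tends to `0`.
-/

open Matrix
open scoped ENNReal

/-- Spectral radius of a real square matrix, computed over ℂ. -/
noncomputable def specRad {n : ℕ} (A : Matrix (Fin n) (Fin n) ℝ) : ℝ≥0∞ :=
  spectralRadius ℂ (A.map Complex.ofReal)

/-- A real square matrix is Schur stable if its spectral radius is `< 1`. -/
def IsSchur {n : ℕ} (A : Matrix (Fin n) (Fin n) ℝ) : Prop := specRad A < 1

open Filter Topology
open scoped NNReal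

theorem spectrum.eventually_norm_pow_le_of_spectralRadius_lt {A : Type*} [NormedRing A]
    [NormedAlgebra ℂ A] [CompleteSpace A] {a : A} {r : ℝ≥0} (h : spectralRadius ℂ a < r) :
    ∀ᶠ j : ℕ in atTop, ‖a ^ j‖ ≤ r ^ j := by
  filter_upwards [(pow_nnnorm_pow_one_div_tendsto_nhds_spectralRadius a).eventually_lt_const h,
    eventually_gt_atTop 0] with j hj hj0
  rw [one_div, ENNReal.rpow_inv_lt_iff (by positivity), ENNReal.rpow_natCast] at hj
  exact_mod_cast hj.le

theorem summable_norm_pow_mul_mul_pow {R : Type*} [NormedRing R] {a b : R} (w : R) {r : ℝ}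
    (hr0 : 0 ≤ r) (hr1 : r < 1) (ha : ∀ᶠ j : ℕ in atTop, ‖a ^ j‖ ≤ r ^ j)
    (hb : ∀ᶠ j : ℕ in atTop, ‖b ^ j‖ ≤ r ^ j) :
    Summable fun j : ℕ => ‖b ^ j * w * a ^ j‖ := by
  have hgeom : Summable fun j : ℕ => ‖w‖ * (r ^ 2) ^ j :=
    (summable_geometric_of_lt_one (by positivity) (by nlinarith)).mul_left _
  refine Summable.of_norm_bounded_eventually_nat hgeom ?_
  filter_upwards [ha, hb] with j haj hbj
  calc ‖‖b ^ j * w * a ^ j‖‖ = ‖b ^ j * w * a ^ j‖ := norm_norm _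
    _ ≤ ‖b ^ j‖ * ‖w‖ * ‖a ^ j‖ := norm_mul₃_le
    _ ≤ r ^ j * ‖w‖ * r ^ j := by gcongr
    _ = ‖w‖ * (r ^ 2) ^ j := by ring

theorem pow_mul_mul_pow_eq_self {M : Type*} [Monoid M] {a b d : M} (hd : b * d * a = d) (k : ℕ) :
    b ^ k * d * a ^ k = d := by
  induction k with
  | zero => simp
  | succ k ih =>
    calc b ^ (k + 1) * d * a ^ (k + 1) = b ^ k * (b * d * a) * a ^ k := by
          simp only [pow_succ b, pow_succ' a, mul_assoc]
      _ = d := by rw [hd, ih]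

theorem HasSum.mul_mul_add_eq {R : Type*} [Ring R] [TopologicalSpace R] [IsTopologicalRing R]
    [T2Space R] {a b w x : R} (h : HasSum (fun j : ℕ => b ^ j * w * a ^ j) x) :
    b * x * a + w = x := by
  have hterm (j : ℕ) : b * (b ^ j * w * a ^ j) * a = b ^ (j + 1) * w * a ^ (j + 1) := by
    simp only [pow_succ' b, pow_succ a, mul_assoc]
  have hshift := (h.mul_left b).mul_right a
  simp only [hterm] at hshift
  have hsum := (hasSum_nat_add_iff (f := fun j : ℕ => b ^ j * w * a ^ j) 1).mp hshift
  simp only [Finset.range_one, Finset.sum_singleton, pow_zero, one_mul, mul_one] at hsum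
  exact hsum.unique h

theorem eq_of_mul_mul_add_eq_of_tendsto {R : Type*} [Ring R] [TopologicalSpace R] [T2Space R]
    {a b w x y : R}
    (hlim : Tendsto (fun k : ℕ => b ^ k * (y - x) * a ^ k) atTop (𝓝 0))
    (hx : b * x * a + w = x) (hy : b * y * a + w = y) : y = x := by
  have hfix : b * (y - x) * a = y - x := by
    rw [mul_sub, sub_mul]
    nth_rewrite 2 [← hx, ← hy]
    abel
  simp only [pow_mul_mul_pow_eq_self hfix] at hlim
  exact sub_eq_zero.mp (tendsto_const_nhds_iff.mp hlim)

section Frobenius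

-- Any submultiplicative norm would do; the Frobenius norm is invariant under `ᵀ` and `ℝ → ℂ`.
attribute [local instance] Matrix.frobeniusNormedRing Matrix.frobeniusNormedAlgebra

theorem IsSchur.exists_norm_pow_le {n : ℕ} {A : Matrix (Fin n) (Fin n) ℝ} (hA : IsSchur A) :
    ∃ r : ℝ, 0 ≤ r ∧ r < 1 ∧ ∀ᶠ j : ℕ in atTop, ‖A ^ j‖ ≤ r ^ j := by
  obtain ⟨r, hAr, hr1⟩ := ENNReal.lt_iff_exists_nnreal_btwn.mp hA
  refine ⟨r, r.coe_nonneg, by exact_mod_cast hr1, ?_⟩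
  filter_upwards [spectrum.eventually_norm_pow_le_of_spectralRadius_lt hAr] with j hj
  have hmap : A.map Complex.ofReal ^ j = (A ^ j).map Complex.ofReal :=
    (map_pow Complex.ofRealHom.mapMatrix A j).symm
  rwa [hmap, frobenius_norm_map_eq _ _ Complex.norm_real] at hj

theorem IsSchur.summable_transpose_pow_mul_mul_pow {n : ℕ} {A : Matrix (Fin n) (Fin n) ℝ}
    (hA : IsSchur A) (W : Matrix (Fin n) (Fin n) ℝ) :
    Summable fun j : ℕ => Aᵀ ^ j * W * A ^ j := by
  obtain ⟨r, hr0, hr1, hAr⟩ := hA.exists_norm_pow_le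
  have hATr : ∀ᶠ j : ℕ in atTop, ‖Aᵀ ^ j‖ ≤ r ^ j := by
    simpa only [← transpose_pow, frobenius_norm_transpose] using hAr
  exact (summable_norm_pow_mul_mul_pow W hr0 hr1 hAr hATr).of_norm

end Frobenius

/-- If `A` is Schur stable then for any symmetric `W` the series
`∑ (Aᵀ)^j W A^j` converges, and its limit `X` is the unique symmetric solution of
the discrete Lyapunov equation `AᵀXA + W = X`. -/
theorem stmt0 {n : ℕ} (A W : Matrix (Fin n) (Fin n) ℝ)
    (hA : IsSchur A) (hW : Wᵀ = W) :
    ∃ X : Matrix (Fin n) (Fin n) ℝ,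
      HasSum (fun j : ℕ => Aᵀ ^ j * W * A ^ j) X ∧
      Xᵀ = X ∧ Aᵀ * X * A + W = X ∧
      ∀ X' : Matrix (Fin n) (Fin n) ℝ, X'ᵀ = X' → Aᵀ * X' * A + W = X' → X' = X := by
  have hX := (hA.summable_transpose_pow_mul_mul_pow W).hasSum
  have hlyap := hX.mul_mul_add_eq
  refine ⟨_, hX, ?_, hlyap, fun X' _ hX' => ?_⟩
  · have hterm : ∀ j : ℕ, (Aᵀ ^ j * W * A ^ j)ᵀ = Aᵀ ^ j * W * A ^ j := fun j => by
      simp only [transpose_mul, transpose_pow, transpose_transpose, hW, mul_assoc]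
    have hXT := hX.matrix_transpose
    simp only [hterm] at hXT
    exact hXT.unique hX
  · exact eq_of_mul_mul_add_eq_of_tendsto
      (hA.summable_transpose_pow_mul_mul_pow _).tendsto_atTop_zero hlyap hX'
end

section
/- Let K and K̃ be feedback gains, and suppose X and X̃ are symmetric matrices satisfying A_Kᵀ X A_K + Q + Kᵀ R K = X and A_{K̃}ᵀ X̃ A_{K̃} + Q + K̃ᵀ R K̃ = X̃, where A_K = A − BK and A_{K̃} = A − BK̃. Then the difference satisfies X − X̃ = A_{K̃}ᵀ (X − X̃) A_{K̃} + (K − K̃)ᵀ N_K + N_Kᵀ (K − K̃) − (K − K̃)ᵀ (R + Bᵀ X B)(K − K̃), where N_K = RK − Bᵀ X (A − BK). -/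
open Matrix
open scoped ENNReal

/-- Difference identity for the Lyapunov solutions of two gains. -/
theorem stmt4 {n m : ℕ} (A : Matrix (Fin n) (Fin n) ℝ) (B : Matrix (Fin n) (Fin m) ℝ)
    (Q : Matrix (Fin n) (Fin n) ℝ) (R : Matrix (Fin m) (Fin m) ℝ)
    (hQ : Qᵀ = Q) (hR : Rᵀ = R)
    (K Kt : Matrix (Fin m) (Fin n) ℝ) (X Xt : Matrix (Fin n) (Fin n) ℝ)
    (hX : Xᵀ = X) (hXt : Xtᵀ = Xt)
    (hLyap : (A - B * K)ᵀ * X * (A - B * K) + Q + Kᵀ * R * K = X)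
    (hLyapt : (A - B * Kt)ᵀ * Xt * (A - B * Kt) + Q + Ktᵀ * R * Kt = Xt) :
    X - Xt =
      (A - B * Kt)ᵀ * (X - Xt) * (A - B * Kt)
        + (K - Kt)ᵀ * (R * K - Bᵀ * X * (A - B * K))
        + (R * K - Bᵀ * X * (A - B * K))ᵀ * (K - Kt)
        - (K - Kt)ᵀ * (R + Bᵀ * X * B) * (K - Kt) := by
  conv_lhs => rw [← hLyap, ← hLyapt]
  simp only [transpose_sub, transpose_mul, transpose_add, hX, hXt, hQ, hR, transpose_transpose]
  simp only [Matrix.sub_mul, Matrix.mul_sub, Matrix.add_mul, Matrix.mul_add]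
  simp only [Matrix.mul_assoc]
  abel
end

section
/- Suppose X_{*,1} and X_{*,2} are symmetric matrices and K_{*,1}, K_{*,2} are Schur-stabilizing gains (ρ(A − BK_{*,i}) < 1) such that each pair satisfies the Lyapunov equation A_{K_{*,i}}ᵀ X_{*,i} A_{K_{*,i}} + Q + K_{*,i}ᵀ R K_{*,i} = X_{*,i} and the stationarity condition R K_{*,i} − Bᵀ X_{*,i}(A − B K_{*,i}) = 0, and suppose R + Bᵀ X_{*,1} B ⪰ 0 and R + Bᵀ X_{*,2} B ⪰ 0. Then X_{*,1} = X_{*,2}. -/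
open Matrix
open scoped ENNReal

/-!
Put `Z = X₁ - X₂`. The Lyapunov equations and the stationarity condition for `K₁` give
`A_{K₂}ᵀ Z A_{K₂} - Z = (K₁ - K₂)ᵀ (R + Bᵀ X₁ B) (K₁ - K₂) ⪰ 0`, so the quadratic form of `Z` can
only grow along the orbits of `A_{K₂}`. Since `A_{K₂}` is Schur stable its powers tend to `0`
(Gelfand's formula), hence `Z ⪯ 0`. Exchanging the roles of the two solutions gives `-Z ⪯ 0`.
-/

open Filter Topology

theorem tendsto_pow_atTop_nhds_zero_of_spectralRadius_lt_one {𝔸 : Type*} [NormedRing 𝔸]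
    [NormedAlgebra ℂ 𝔸] [CompleteSpace 𝔸] {a : 𝔸} (ha : spectralRadius ℂ a < 1) :
    Tendsto (fun k : ℕ => a ^ k) atTop (𝓝 0) := by
  obtain ⟨c, hac, hc1⟩ := exists_between ha
  lift c to NNReal using ne_top_of_lt hc1
  have hgelfand := spectrum.pow_nnnorm_pow_one_div_tendsto_nhds_spectralRadius a
  have hbound : ∀ᶠ k : ℕ in atTop, ‖a ^ k‖₊ ≤ c ^ k := by
    filter_upwards [hgelfand.eventually_lt_const hac, eventually_gt_atTop 0] with k hk hk0
    rw [one_div, ENNReal.rpow_inv_lt_iff (by positivity), ENNReal.rpow_natCast] at hk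
    exact_mod_cast hk.le
  refine squeeze_zero_norm' (hbound.mono fun k hk => ?_)
    (tendsto_pow_atTop_nhds_zero_of_lt_one c.2 (by exact_mod_cast hc1))
  exact_mod_cast hk

theorem IsSchur.tendsto_pow_atTop_nhds_zero {n : ℕ} {A : Matrix (Fin n) (Fin n) ℝ}
    (hA : IsSchur A) : Tendsto (fun k : ℕ => A ^ k) atTop (𝓝 0) := by
  have hC : Tendsto (fun k : ℕ => A.map Complex.ofReal ^ k) atTop (𝓝 0) := by
    -- any submultiplicative norm will do: its topology is the product topology
    let _ := Matrix.linftyOpNormedRing (n := Fin n) (α := ℂ)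
    let _ := Matrix.linftyOpNormedAlgebra (n := Fin n) (R := ℂ) (α := ℂ)
    exact tendsto_pow_atTop_nhds_zero_of_spectralRadius_lt_one hA
  have hre := ((continuous_id.matrix_map Complex.continuous_re).tendsto 0).comp hC
  have hmap : ∀ k : ℕ, (A.map Complex.ofReal ^ k).map Complex.re = A ^ k := fun k => by
    change (Complex.ofRealHom.mapMatrix A ^ k).map Complex.re = A ^ k
    rw [← map_pow, RingHom.mapMatrix_apply, Matrix.map_map]
    ext; simp
  simpa [Function.comp_def, hmap] using hre

open scoped MatrixOrder

theorem IsSchur.nonpos_of_le_transpose_mul_mul {n : ℕ} {A Z : Matrix (Fin n) (Fin n) ℝ}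
    (hA : IsSchur A) (hZ : Zᵀ = Z) (h : Z ≤ Aᵀ * Z * A) : Z ≤ 0 := by
  have hiter : ∀ k : ℕ, Z ≤ (A ^ k)ᵀ * Z * A ^ k := by
    intro k
    induction k with
    | zero => simp
    | succ k ih =>
      calc Z ≤ Aᵀ * Z * A := h
        _ ≤ Aᵀ * ((A ^ k)ᵀ * Z * A ^ k) * A := by
          simpa [Matrix.star_eq_conjTranspose] using star_left_conjugate_le_conjugate ih A
        _ = (A ^ (k + 1))ᵀ * Z * A ^ (k + 1) := by
          simp only [pow_succ, transpose_mul, Matrix.mul_assoc]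
  have hquad : ∀ x : Fin n → ℝ, x ⬝ᵥ Z *ᵥ x ≤ 0 := by
    intro x
    have hc : Continuous fun M : Matrix (Fin n) (Fin n) ℝ => x ⬝ᵥ (Mᵀ * Z * M) *ᵥ x := by
      fun_prop
    have hlim : Tendsto (fun k : ℕ => x ⬝ᵥ ((A ^ k)ᵀ * Z * A ^ k) *ᵥ x) atTop (𝓝 0) := by
      simpa only [Function.comp_def, transpose_zero, Matrix.mul_zero, zero_mulVec, dotProduct_zero]
        using (hc.tendsto 0).comp hA.tendsto_pow_atTop_nhds_zero
    refine ge_of_tendsto' hlim fun k => ?_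
    simpa [sub_mulVec] using (hiter k).dotProduct_mulVec_nonneg x
  rw [Matrix.le_iff, zero_sub]
  refine PosSemidef.of_dotProduct_mulVec_nonneg ?_ fun x => by simpa [neg_mulVec] using hquad x
  simp [IsHermitian, hZ]

theorem transpose_mul_sub_mul_sub_eq_of_lyapunov {𝕜 ι κ : Type*} [CommRing 𝕜] [Fintype ι]
    [Fintype κ] {A Q X₁ X₂ : Matrix ι ι 𝕜} {B : Matrix ι κ 𝕜} {R : Matrix κ κ 𝕜}
    {K₁ K₂ : Matrix κ ι 𝕜}
    (hR : Rᵀ = R) (hX₁ : X₁ᵀ = X₁)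
    (hLyap₁ : (A - B * K₁)ᵀ * X₁ * (A - B * K₁) + Q + K₁ᵀ * R * K₁ = X₁)
    (hLyap₂ : (A - B * K₂)ᵀ * X₂ * (A - B * K₂) + Q + K₂ᵀ * R * K₂ = X₂)
    (hN₁ : R * K₁ - Bᵀ * X₁ * (A - B * K₁) = 0) :
    (A - B * K₂)ᵀ * (X₁ - X₂) * (A - B * K₂) - (X₁ - X₂) =
      (K₁ - K₂)ᵀ * (R + Bᵀ * X₁ * B) * (K₁ - K₂) := by
  rw [← sub_eq_zero]
  calc _ = ((A - B * K₁)ᵀ * X₁ * (A - B * K₁) + Q + K₁ᵀ * R * K₁ - X₁)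
        - ((A - B * K₂)ᵀ * X₂ * (A - B * K₂) + Q + K₂ᵀ * R * K₂ - X₂)
        - (K₁ - K₂)ᵀ * (R * K₁ - Bᵀ * X₁ * (A - B * K₁))
        - (R * K₁ - Bᵀ * X₁ * (A - B * K₁))ᵀ * (K₁ - K₂) := by
        simp only [transpose_sub, transpose_mul, transpose_transpose, hX₁, hR, Matrix.mul_sub,
          Matrix.sub_mul, Matrix.mul_add, Matrix.add_mul, Matrix.mul_assoc]
        abel
    _ = 0 := by rw [hLyap₁, hLyap₂, hN₁]; simp

theorem sub_le_transpose_mul_sub_mul_of_lyapunov {ι κ : Type*} [Fintype ι] [Fintype κ]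
    {A Q X₁ X₂ : Matrix ι ι ℝ} {B : Matrix ι κ ℝ} {R : Matrix κ κ ℝ} {K₁ K₂ : Matrix κ ι ℝ}
    (hR : Rᵀ = R) (hX₁ : X₁ᵀ = X₁)
    (hLyap₁ : (A - B * K₁)ᵀ * X₁ * (A - B * K₁) + Q + K₁ᵀ * R * K₁ = X₁)
    (hLyap₂ : (A - B * K₂)ᵀ * X₂ * (A - B * K₂) + Q + K₂ᵀ * R * K₂ = X₂)
    (hN₁ : R * K₁ - Bᵀ * X₁ * (A - B * K₁) = 0) (hP₁ : (R + Bᵀ * X₁ * B).PosSemidef) :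
    X₁ - X₂ ≤ (A - B * K₂)ᵀ * (X₁ - X₂) * (A - B * K₂) := by
  rw [Matrix.le_iff, transpose_mul_sub_mul_sub_eq_of_lyapunov hR hX₁ hLyap₁ hLyap₂ hN₁]
  simpa [conjTranspose_eq_transpose_of_trivial] using hP₁.conjTranspose_mul_mul_same (K₁ - K₂)

theorem stmt5_general {n m : ℕ} (A : Matrix (Fin n) (Fin n) ℝ) (B : Matrix (Fin n) (Fin m) ℝ)
    (Q : Matrix (Fin n) (Fin n) ℝ) (R : Matrix (Fin m) (Fin m) ℝ)
    (hR : Rᵀ = R)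
    (K1 K2 : Matrix (Fin m) (Fin n) ℝ) (X1 X2 : Matrix (Fin n) (Fin n) ℝ)
    (hX1 : X1ᵀ = X1) (hX2 : X2ᵀ = X2)
    (hS1 : IsSchur (A - B * K1)) (hS2 : IsSchur (A - B * K2))
    (hLyap1 : (A - B * K1)ᵀ * X1 * (A - B * K1) + Q + K1ᵀ * R * K1 = X1)
    (hLyap2 : (A - B * K2)ᵀ * X2 * (A - B * K2) + Q + K2ᵀ * R * K2 = X2)
    (hN1 : R * K1 - Bᵀ * X1 * (A - B * K1) = 0)
    (hN2 : R * K2 - Bᵀ * X2 * (A - B * K2) = 0)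
    (hP1 : (R + Bᵀ * X1 * B).PosSemidef) (hP2 : (R + Bᵀ * X2 * B).PosSemidef) :
    X1 = X2 := by
  have h₁₂ := hS2.nonpos_of_le_transpose_mul_mul (by simp [hX1, hX2])
    (sub_le_transpose_mul_sub_mul_of_lyapunov hR hX1 hLyap1 hLyap2 hN1 hP1)
  have h₂₁ := hS1.nonpos_of_le_transpose_mul_mul (by simp [hX1, hX2])
    (sub_le_transpose_mul_sub_mul_of_lyapunov hR hX2 hLyap2 hLyap1 hN2 hP2)
  exact le_antisymm (sub_nonpos.mp h₁₂) (sub_nonpos.mp h₂₁)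

/-- Uniqueness of stabilizing stationary solutions. -/
theorem stmt5 {n m : ℕ} (A : Matrix (Fin n) (Fin n) ℝ) (B : Matrix (Fin n) (Fin m) ℝ)
    (Q : Matrix (Fin n) (Fin n) ℝ) (R : Matrix (Fin m) (Fin m) ℝ)
    (hQ : Qᵀ = Q) (hR : Rᵀ = R)
    (K1 K2 : Matrix (Fin m) (Fin n) ℝ) (X1 X2 : Matrix (Fin n) (Fin n) ℝ)
    (hX1 : X1ᵀ = X1) (hX2 : X2ᵀ = X2)
    (hS1 : IsSchur (A - B * K1)) (hS2 : IsSchur (A - B * K2))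
    (hLyap1 : (A - B * K1)ᵀ * X1 * (A - B * K1) + Q + K1ᵀ * R * K1 = X1)
    (hLyap2 : (A - B * K2)ᵀ * X2 * (A - B * K2) + Q + K2ᵀ * R * K2 = X2)
    (hN1 : R * K1 - Bᵀ * X1 * (A - B * K1) = 0)
    (hN2 : R * K2 - Bᵀ * X2 * (A - B * K2) = 0)
    (hP1 : (R + Bᵀ * X1 * B).PosSemidef) (hP2 : (R + Bᵀ * X2 * B).PosSemidef) :
    X1 = X2 :=
  stmt5_general A B Q R hR K1 K2 X1 X2 hX1 hX2 hS1 hS2 hLyap1 hLyap2 hN1 hN2 hP1 hP2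
end

section
/- Let K_* be a Schur-stabilizing gain with symmetric solution X_* of its Lyapunov equation A_{K_*}ᵀ X_* A_{K_*} + Q + K_*ᵀ R K_* = X_* satisfying R K_* − Bᵀ X_* A_{K_*} = 0 and R + Bᵀ X_* B ≻ 0. Then for any Schur-stabilizing K with symmetric solution X of its Lyapunov equation A_Kᵀ X A_K + Q + Kᵀ R K = X, we have X ⪰ X_*; i.e., X_* is the minimal value matrix (maximal DARE solution) among all stabilizing gains. -/
open Matrix
open scoped ENNReal
open Filter Topology
open scoped NNReal

section norm
open scoped Matrix.Norms.L2Operator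

lemma entry_abs_le_l2opNorm {n : ℕ} (M : Matrix (Fin n) (Fin n) ℂ) (i j : Fin n) :
    ‖M i j‖ ≤ ‖M‖ := by
  set x : EuclideanSpace ℂ (Fin n) := EuclideanSpace.single j 1 with hx
  have h1 := M.l2_opNorm_mulVec x
  have hxn : ‖x‖ = 1 := by rw [hx, EuclideanSpace.norm_single, norm_one]
  rw [hxn, mul_one] at h1
  set y : EuclideanSpace ℂ (Fin n) := (EuclideanSpace.equiv (Fin n) ℂ).symm (M *ᵥ x) with hy
  have hyi : y i = M i j := by
    have hxp : ∀ k, (⇑x : Fin n → ℂ) k = if k = j then 1 else 0 :=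
      fun k => EuclideanSpace.single_apply j 1 k
    show (M *ᵥ ⇑x) i = M i j
    rw [mulVec, dotProduct]
    simp only [hxp, mul_ite, mul_one, mul_zero]
    simp
  have h2 : ‖y i‖ ≤ ‖y‖ := by
    rw [EuclideanSpace.norm_eq]
    have he : ‖y i‖ = Real.sqrt (‖y i‖ ^ 2) := by
      rw [Real.sqrt_sq (norm_nonneg _)]
    rw [he]
    apply Real.sqrt_le_sqrt
    exact Finset.single_le_sum (f := fun k => ‖y k‖ ^ 2)
      (fun k _ => sq_nonneg _) (Finset.mem_univ i)
  calc ‖M i j‖ = ‖y i‖ := by rw [hyi]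
    _ ≤ ‖y‖ := h2
    _ ≤ ‖M‖ := h1

lemma schur_tendsto_entry {n : ℕ} {A : Matrix (Fin n) (Fin n) ℝ} (h : IsSchur A)
    (i j : Fin n) :
    Filter.Tendsto (fun N : ℕ => (A ^ N) i j) Filter.atTop (nhds 0) := by
  set Ac := A.map Complex.ofReal with hAc
  haveI : CompleteSpace (Matrix (Fin n) (Fin n) ℂ) := FiniteDimensional.complete ℂ _
  obtain ⟨r, hr1, hr2⟩ := ENNReal.lt_iff_exists_nnreal_btwn.mp h
  have hG := spectrum.pow_nnnorm_pow_one_div_tendsto_nhds_spectralRadius Ac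
  have hev : ∀ᶠ N : ℕ in atTop, (‖Ac ^ N‖₊ : ℝ≥0∞) ^ (1 / (N:ℝ)) < (r : ℝ≥0∞) :=
    hG.eventually_lt_const hr1
  have hbound : ∀ᶠ N : ℕ in atTop, ‖Ac ^ N‖ ≤ (r : ℝ) ^ N := by
    filter_upwards [hev, Filter.eventually_ge_atTop 1] with N hN hN1
    have hNpos : (0:ℝ) < (N:ℝ) := by exact_mod_cast hN1
    have h1 : ((‖Ac ^ N‖₊ : ℝ≥0∞) ^ (1 / (N:ℝ))) ^ (N:ℝ) ≤ ((r : ℝ≥0∞)) ^ (N:ℝ) :=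
      ENNReal.rpow_le_rpow hN.le hNpos.le
    rw [← ENNReal.rpow_mul, one_div_mul_cancel hNpos.ne', ENNReal.rpow_one] at h1
    have h2 : (‖Ac ^ N‖₊ : ℝ≥0∞) ≤ ((r ^ N : ℝ≥0) : ℝ≥0∞) := by
      rw [ENNReal.coe_pow]
      calc (‖Ac ^ N‖₊ : ℝ≥0∞) ≤ (r : ℝ≥0∞) ^ (N:ℝ) := h1
        _ = (r : ℝ≥0∞) ^ N := by rw [ENNReal.rpow_natCast]
    have h3 : ‖Ac ^ N‖₊ ≤ r ^ N := by exact_mod_cast h2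
    calc ‖Ac ^ N‖ = ((‖Ac ^ N‖₊ : ℝ≥0) : ℝ) := rfl
      _ ≤ ((r ^ N : ℝ≥0) : ℝ) := by exact_mod_cast h3
      _ = (r : ℝ) ^ N := by push_cast; ring
  have hrlt : (r : ℝ) < 1 := by exact_mod_cast hr2
  have hpow : Filter.Tendsto (fun N : ℕ => (r : ℝ) ^ N) atTop (nhds 0) :=
    tendsto_pow_atTop_nhds_zero_of_lt_one r.coe_nonneg hrlt
  have key : Filter.Tendsto (fun N : ℕ => ‖Ac ^ N‖) atTop (nhds 0) :=
    squeeze_zero' (Filter.Eventually.of_forall fun N => norm_nonneg _) hbound hpow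
  have hmap : ∀ N : ℕ, Ac ^ N = (A ^ N).map Complex.ofReal := fun N =>
    (map_pow (Complex.ofRealHom.mapMatrix) A N).symm
  have habs : ∀ N : ℕ, ‖(A ^ N) i j‖ ≤ ‖Ac ^ N‖ := by
    intro N
    have h4 := entry_abs_le_l2opNorm (Ac ^ N) i j
    rw [hmap, Matrix.map_apply, Complex.norm_real] at h4
    rwa [← hmap] at h4
  exact squeeze_zero_norm habs key

end norm

lemma IsSchur.tendsto_pow_zero {n : ℕ} {A : Matrix (Fin n) (Fin n) ℝ} (h : IsSchur A) :
    Filter.Tendsto (fun N : ℕ => A ^ N) Filter.atTop (nhds 0) := by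
  refine tendsto_pi_nhds.mpr ?_
  intro i
  rw [tendsto_pi_nhds]
  intro j
  simpa using schur_tendsto_entry h i j

lemma quad_eq {n : ℕ} (C W : Matrix (Fin n) (Fin n) ℝ) (y : Fin n → ℝ) :
    y ⬝ᵥ ((Cᵀ * W * C) *ᵥ y) = (C *ᵥ y) ⬝ᵥ (W *ᵥ (C *ᵥ y)) := by
  rw [show Cᵀ * W * C = Cᵀ * (W * C) from by rw [Matrix.mul_assoc], ← mulVec_mulVec,
    dotProduct_mulVec y Cᵀ, vecMul_transpose, ← mulVec_mulVec]


/-- The stationary stabilizing value matrix `X_*` is minimal among the value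
matrices of all stabilizing gains. -/
theorem stmt8 {n m : ℕ} (A : Matrix (Fin n) (Fin n) ℝ) (B : Matrix (Fin n) (Fin m) ℝ)
    (Q : Matrix (Fin n) (Fin n) ℝ) (R : Matrix (Fin m) (Fin m) ℝ)
    (hQ : Qᵀ = Q) (hR : Rᵀ = R)
    (Ks : Matrix (Fin m) (Fin n) ℝ) (Xs : Matrix (Fin n) (Fin n) ℝ)
    (hXs : Xsᵀ = Xs) (hSs : IsSchur (A - B * Ks))
    (hLyaps : (A - B * Ks)ᵀ * Xs * (A - B * Ks) + Q + Ksᵀ * R * Ks = Xs)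
    (hNs : R * Ks - Bᵀ * Xs * (A - B * Ks) = 0)
    (hPs : (R + Bᵀ * Xs * B).PosDef) :
    ∀ (K : Matrix (Fin m) (Fin n) ℝ) (X : Matrix (Fin n) (Fin n) ℝ),
      Xᵀ = X → IsSchur (A - B * K) →
      (A - B * K)ᵀ * X * (A - B * K) + Q + Kᵀ * R * K = X →
      (X - Xs).PosSemidef := by
  intro K X hX hS hLyap
  set G := A - B * K with hG
  set D := K - Ks with hD
  set M := Dᵀ * (R + Bᵀ * Xs * B) * D with hM
  -- transposed null condition
  have h3 : Ksᵀ * R - (A - B * Ks)ᵀ * Xs * B = 0 := by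
    have h := congrArg Matrix.transpose hNs
    simp only [Matrix.transpose_sub, Matrix.transpose_mul, Matrix.transpose_transpose,
      hR, hXs, Matrix.transpose_zero] at h
    rw [← h]
    simp only [Matrix.transpose_sub, Matrix.transpose_mul, Matrix.sub_mul, Matrix.mul_sub,
      Matrix.add_mul, Matrix.mul_add, Matrix.mul_assoc]
  have expand : (Gᵀ * Xs * G + Q + Kᵀ * R * K) - (Xs + M)
      = (Ksᵀ * R - (A - B * Ks)ᵀ * Xs * B) * D
        + Dᵀ * (R * Ks - Bᵀ * Xs * (A - B * Ks))
        + ((A - B * Ks)ᵀ * Xs * (A - B * Ks) + Q + Ksᵀ * R * Ks - Xs) := by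
    simp only [hG, hD, hM, Matrix.transpose_sub, Matrix.transpose_mul, Matrix.transpose_add,
      hXs, hR, Matrix.sub_mul, Matrix.mul_sub, Matrix.add_mul, Matrix.mul_add, Matrix.mul_assoc]
    abel
  have hXsEq : Gᵀ * Xs * G + Q + Kᵀ * R * K = Xs + M := by
    rw [← sub_eq_zero, expand, hNs, h3, hLyaps]
    simp
  have hDelta : X - Xs = Gᵀ * (X - Xs) * G + M := by
    have e : Gᵀ * (X - Xs) * G + M
        = (Gᵀ * X * G + Q + Kᵀ * R * K) - ((Gᵀ * Xs * G + Q + Kᵀ * R * K) - M) := by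
      simp only [Matrix.sub_mul, Matrix.mul_sub, Matrix.add_mul, Matrix.mul_add, Matrix.mul_assoc]
      abel
    rw [e, hLyap, hXsEq]
    abel
  have hiter : ∀ N : ℕ, X - Xs
      = (G ^ N)ᵀ * (X - Xs) * (G ^ N)
        + ∑ k ∈ Finset.range N, (G ^ k)ᵀ * M * (G ^ k) := by
    intro N
    induction N with
    | zero => simp
    | succ N ih =>
      have hcomm : G ^ N * G = G * G ^ N := (pow_succ G N).symm.trans (pow_succ' G N)
      conv_lhs => rw [ih, hDelta]
      rw [Finset.sum_range_succ]
      simp only [pow_succ, hcomm, Matrix.transpose_mul, Matrix.mul_add, Matrix.add_mul,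
        Matrix.mul_assoc]
      abel
  -- M is PSD
  have hMps : M.PosSemidef := by
    have hPs' : (R + Bᵀ * Xs * B).PosSemidef := hPs.posSemidef
    have h := hPs'.conjTranspose_mul_mul_same D
    have hDT : Dᴴ = Dᵀ := by
      ext i j
      simp [Matrix.conjTranspose_apply]
    rwa [hDT] at h
  rw [posSemidef_iff_dotProduct_mulVec]
  constructor
  · show (X - Xs)ᴴ = X - Xs
    have : ∀ W : Matrix (Fin n) (Fin n) ℝ, Wᴴ = Wᵀ := by
      intro W; ext i j; simp [Matrix.conjTranspose_apply]
    rw [this, Matrix.transpose_sub, hX, hXs]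
  · intro x
    have hstar : star x = x := by
      funext i; simp
    rw [hstar]
    -- lower bound by the shrinking term
    have hge : ∀ N : ℕ,
        (G ^ N *ᵥ x) ⬝ᵥ ((X - Xs) *ᵥ (G ^ N *ᵥ x)) ≤ x ⬝ᵥ ((X - Xs) *ᵥ x) := by
      intro N
      have h0 := congrArg (fun W : Matrix (Fin n) (Fin n) ℝ => x ⬝ᵥ (W *ᵥ x)) (hiter N)
      simp only [Matrix.add_mulVec, dotProduct_add] at h0
      rw [quad_eq] at h0
      have hsum : 0 ≤ x ⬝ᵥ ((∑ k ∈ Finset.range N, (G ^ k)ᵀ * M * (G ^ k)) *ᵥ x) := by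
        have hsv : (∑ k ∈ Finset.range N, (G ^ k)ᵀ * M * G ^ k) *ᵥ x
            = ∑ k ∈ Finset.range N, ((G ^ k)ᵀ * M * G ^ k) *ᵥ x :=
          map_sum (Matrix.mulVec.addMonoidHomLeft x) _ (Finset.range N)
        have hds : x ⬝ᵥ (∑ k ∈ Finset.range N, ((G ^ k)ᵀ * M * G ^ k) *ᵥ x)
            = ∑ k ∈ Finset.range N, x ⬝ᵥ (((G ^ k)ᵀ * M * G ^ k) *ᵥ x) := by
          simp only [dotProduct, Finset.sum_apply, Finset.mul_sum]
          exact Finset.sum_comm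
        rw [hsv, hds]
        refine Finset.sum_nonneg fun k _ => ?_
        rw [quad_eq]
        have := hMps.dotProduct_mulVec_nonneg (G ^ k *ᵥ x)
        rwa [show star (G ^ k *ᵥ x) = G ^ k *ᵥ x from funext fun i => by simp] at this
      linarith [h0.le, h0.ge]
    have hw : Filter.Tendsto (fun N : ℕ => G ^ N *ᵥ x) Filter.atTop (nhds 0) := by
      have hc : Continuous fun W : Matrix (Fin n) (Fin n) ℝ => W *ᵥ x :=
        continuous_id.matrix_mulVec continuous_const
      have h5 := (hc.tendsto 0).comp hS.tendsto_pow_zero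
      simpa only [Function.comp_def, Matrix.zero_mulVec] using h5
    have ht : Filter.Tendsto
        (fun N : ℕ => (G ^ N *ᵥ x) ⬝ᵥ ((X - Xs) *ᵥ (G ^ N *ᵥ x))) Filter.atTop (nhds 0) := by
      have hc : Continuous fun v : Fin n → ℝ => v ⬝ᵥ ((X - Xs) *ᵥ v) :=
        continuous_id.dotProduct
          ((continuous_const : Continuous fun _ : Fin n → ℝ => X - Xs).matrix_mulVec
            continuous_id)
      have h6 := (hc.tendsto 0).comp hw
      simpa only [Function.comp_def, zero_dotProduct, Matrix.mulVec_zero] using h6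
    exact le_of_tendsto ht (Filter.Eventually.of_forall hge)
end

section
/- Let K_* be Schur-stabilizing with N_{K_*} = R K_* − Bᵀ X_* A_{K_*} = 0 and R + Bᵀ X_* B ≻ 0, and let K_ζ be a gain (possibly only marginally stabilizing) whose Lyapunov equation admits a symmetric solution Z with Z ⪰ X_*. If (λ, v) is an eigenpair of A − B K_ζ with |λ| = 1, then (K_ζ − K_*) v = 0, and hence (A − B K_*) v = λ v. In particular, since A − B K_* is Schur, no such eigenpair exists, i.e., no eigenvalue of A − B K_ζ can lie on the unit circle. -/
/-
Since `N_{K_*} = 0` and `R`, `X_*` are symmetric, subtracting the two Lyapunov equations gives the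
Stein equation `Z - X_* = A_{K_ζ}ᵀ (Z - X_*) A_{K_ζ} + (K_ζ - K_*)ᵀ (R + Bᵀ X_* B) (K_ζ - K_*)`.
Evaluated at an eigenvector `v` of `A_{K_ζ}` with `|λ| = 1`, the `Z - X_*` terms on both sides
coincide, so the positive definite form `R + Bᵀ X_* B` vanishes at `(K_ζ - K_*) v`, which is
therefore `0`. Then `A_{K_*} v = A_{K_ζ} v = λ v`, so `λ` lies in the spectrum of the Schur matrix
`A_{K_*}`, which is impossible.
-/

open Matrix
open scoped ENNReal

open scoped ComplexOrder

namespace Matrix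

theorem transpose_map_ofReal {m n : Type*} (M : Matrix m n ℝ) :
    Mᵀ.map Complex.ofReal = (M.map Complex.ofReal)ᴴ := by
  rw [← conjTranspose_eq_transpose_of_trivial]
  exact conjTranspose_map _ fun x => (Complex.conj_ofReal x).symm

theorem map_ofReal_mul {m ι κ : Type*} [Fintype ι] (M : Matrix m ι ℝ) (N : Matrix ι κ ℝ) :
    (M * N).map Complex.ofReal = M.map Complex.ofReal * N.map Complex.ofReal :=
  Matrix.map_mul (f := Complex.ofRealHom)

variable {ι κ : Type*} [Fintype ι] [Fintype κ]

theorem re_star_dotProduct_map_ofReal_mulVec (P : Matrix ι ι ℝ) (w : ι → ℂ) :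
    (star w ⬝ᵥ P.map Complex.ofReal *ᵥ w).re
      = (fun i => (w i).re) ⬝ᵥ P *ᵥ (fun i => (w i).re)
        + (fun i => (w i).im) ⬝ᵥ P *ᵥ (fun i => (w i).im) := by
  simp only [dotProduct, mulVec, Pi.star_apply, map_apply, Complex.re_sum, Finset.mul_sum,
    ← Finset.sum_add_distrib]
  refine Finset.sum_congr rfl fun i _ => Finset.sum_congr rfl fun j _ => ?_
  simp only [Complex.mul_re, Complex.mul_im, Complex.star_def, Complex.conj_re, Complex.conj_im,
    Complex.ofReal_re, Complex.ofReal_im]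
  ring

theorem PosDef.map_ofReal {P : Matrix ι ι ℝ} (hP : P.PosDef) :
    (P.map Complex.ofReal).PosDef := by
  have hherm : (P.map Complex.ofReal).IsHermitian := by
    rw [IsHermitian, ← transpose_map_ofReal, ← conjTranspose_eq_transpose_of_trivial,
      hP.isHermitian.eq]
  refine PosDef.of_dotProduct_mulVec_pos hherm fun w hw => Complex.lt_def.mpr ⟨?_, ?_⟩
  · rw [re_star_dotProduct_map_ofReal_mulVec]
    have hre := hP.posSemidef.dotProduct_mulVec_nonneg (fun i => (w i).re)
    have him := hP.posSemidef.dotProduct_mulVec_nonneg (fun i => (w i).im)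
    simp only [star_trivial] at hre him
    by_cases hw' : (fun i => (w i).re) = 0
    · have hne : (fun i => (w i).im) ≠ 0 := fun h => hw <| funext fun i =>
        Complex.ext (congrFun hw' i) (congrFun h i)
      simpa using add_pos_of_nonneg_of_pos hre (by simpa using hP.dotProduct_mulVec_pos hne)
    · simpa using add_pos_of_pos_of_nonneg (by simpa using hP.dotProduct_mulVec_pos hw') him
  · exact (hherm.im_star_dotProduct_mulVec_self w).symm

theorem star_dotProduct_conjTranspose_mul_mul_mulVec {R : Type*} [CommSemiring R] [StarRing R]
    (N : Matrix κ ι R) (E : Matrix κ κ R) (v : ι → R) :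
    star v ⬝ᵥ (Nᴴ * E * N) *ᵥ v = star (N *ᵥ v) ⬝ᵥ E *ᵥ (N *ᵥ v) := by
  rw [← mulVec_mulVec, ← mulVec_mulVec, dotProduct_mulVec, ← star_mulVec]

theorem mulVec_eq_zero_of_lyapunov {𝕜 : Type*} [RCLike 𝕜] {D M : Matrix ι ι 𝕜}
    {K : Matrix κ ι 𝕜} {P : Matrix κ κ 𝕜} (hP : P.PosDef)
    (hD : D = Mᴴ * D * M + Kᴴ * P * K) {lam : 𝕜} (hlam : ‖lam‖ = 1) {v : ι → 𝕜}
    (hv : M *ᵥ v = lam • v) : K *ᵥ v = 0 := by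
  have hunit : star lam * lam = 1 := by
    rw [RCLike.star_def, RCLike.conj_mul, hlam]; norm_num
  have hM : star v ⬝ᵥ (Mᴴ * D * M) *ᵥ v = star v ⬝ᵥ D *ᵥ v := by
    rw [star_dotProduct_conjTranspose_mul_mul_mulVec, hv, star_smul, mulVec_smul, smul_dotProduct,
      dotProduct_smul, smul_eq_mul, smul_eq_mul, ← mul_assoc, hunit, one_mul]
  have hquad := congrArg (fun N => star v ⬝ᵥ N *ᵥ v) hD
  simp only [add_mulVec, dotProduct_add, hM, star_dotProduct_conjTranspose_mul_mul_mulVec,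
    left_eq_add] at hquad
  by_contra hK
  exact (hP.dotProduct_mulVec_pos hK).ne' hquad

theorem mulVec_map_ofReal_eq_zero_of_lyapunov {D M : Matrix ι ι ℝ} {K : Matrix κ ι ℝ}
    {P : Matrix κ κ ℝ} (hP : P.PosDef) (hD : D = Mᵀ * D * M + Kᵀ * P * K) {lam : ℂ}
    (hlam : ‖lam‖ = 1) {v : ι → ℂ} (hv : M.map Complex.ofReal *ᵥ v = lam • v) :
    K.map Complex.ofReal *ᵥ v = 0 := by
  refine mulVec_eq_zero_of_lyapunov (D := D.map Complex.ofReal) hP.map_ofReal ?_ hlam hv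
  simpa only [Matrix.map_add _ Complex.ofReal_add, map_ofReal_mul, transpose_map_ofReal]
    using congrArg (·.map Complex.ofReal) hD

end Matrix

theorem lyapunov_sub_eq_of_stationary {α ι κ : Type*} [CommRing α] [Fintype ι] [Fintype κ]
    {A Q X Z : Matrix ι ι α} {B : Matrix ι κ α} {R : Matrix κ κ α} {Ks Kz : Matrix κ ι α}
    (hX : Xᵀ = X) (hR : Rᵀ = R)
    (hLyapX : (A - B * Ks)ᵀ * X * (A - B * Ks) + Q + Ksᵀ * R * Ks = X)
    (hLyapZ : (A - B * Kz)ᵀ * Z * (A - B * Kz) + Q + Kzᵀ * R * Kz = Z)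
    (hN : R * Ks - Bᵀ * X * (A - B * Ks) = 0) :
    Z - X = (A - B * Kz)ᵀ * (Z - X) * (A - B * Kz)
      + (Kz - Ks)ᵀ * (R + Bᵀ * X * B) * (Kz - Ks) := by
  have hNT : Ksᵀ * R - (A - B * Ks)ᵀ * X * B = 0 := by
    simpa only [transpose_sub, transpose_mul, transpose_transpose, hX, hR, transpose_zero,
      Matrix.mul_assoc] using congrArg transpose hN
  have hdiff : ((A - B * Kz)ᵀ * Z * (A - B * Kz) + Q + Kzᵀ * R * Kz)
      - ((A - B * Ks)ᵀ * X * (A - B * Ks) + Q + Ksᵀ * R * Ks)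
      - ((A - B * Kz)ᵀ * (Z - X) * (A - B * Kz) + (Kz - Ks)ᵀ * (R + Bᵀ * X * B) * (Kz - Ks))
      = (Ksᵀ * R - (A - B * Ks)ᵀ * X * B) * (Kz - Ks)
        + (Kz - Ks)ᵀ * (R * Ks - Bᵀ * X * (A - B * Ks)) := by
    simp only [transpose_sub, transpose_mul, Matrix.sub_mul, Matrix.mul_sub, Matrix.add_mul,
      Matrix.mul_add, Matrix.mul_assoc]
    abel
  rw [hN, hNT, Matrix.zero_mul, Matrix.mul_zero, add_zero, hLyapZ, hLyapX] at hdiff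
  exact sub_eq_zero.mp hdiff

theorem norm_le_specRad_of_mulVec_eq_smul {n : ℕ} {A : Matrix (Fin n) (Fin n) ℝ} {lam : ℂ}
    {v : Fin n → ℂ} (hv : v ≠ 0) (h : A.map Complex.ofReal *ᵥ v = lam • v) :
    (‖lam‖₊ : ℝ≥0∞) ≤ specRad A := by
  have hmem : lam ∈ spectrum ℂ (A.map Complex.ofReal) := by
    rw [← Matrix.spectrum_toLin']
    exact (Module.End.hasEigenvalue_of_hasEigenvector
      ⟨Module.End.mem_eigenspace_iff.mpr (by rwa [Matrix.toLin'_apply]), hv⟩).mem_spectrum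
  exact le_iSup₂ (f := fun (k : ℂ) (_ : k ∈ spectrum ℂ (A.map Complex.ofReal)) => (‖k‖₊ : ℝ≥0∞))
    lam hmem

theorem IsSchur.norm_lt_one_of_mulVec_eq_smul {n : ℕ} {A : Matrix (Fin n) (Fin n) ℝ}
    (hA : IsSchur A) {lam : ℂ} {v : Fin n → ℂ} (hv : v ≠ 0)
    (h : A.map Complex.ofReal *ᵥ v = lam • v) : ‖lam‖ < 1 := by
  exact_mod_cast (norm_le_specRad_of_mulVec_eq_smul hv h).trans_lt hA

theorem stmt9_general {n m : ℕ} (A : Matrix (Fin n) (Fin n) ℝ) (B : Matrix (Fin n) (Fin m) ℝ)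
    (Q : Matrix (Fin n) (Fin n) ℝ) (R : Matrix (Fin m) (Fin m) ℝ)
    (hR : Rᵀ = R)
    (Ks Kz : Matrix (Fin m) (Fin n) ℝ) (Xs Z : Matrix (Fin n) (Fin n) ℝ)
    (hXs : Xsᵀ = Xs) (hSs : IsSchur (A - B * Ks))
    (hLyaps : (A - B * Ks)ᵀ * Xs * (A - B * Ks) + Q + Ksᵀ * R * Ks = Xs)
    (hNs : R * Ks - Bᵀ * Xs * (A - B * Ks) = 0)
    (hPs : (R + Bᵀ * Xs * B).PosDef)
    (hLyapz : (A - B * Kz)ᵀ * Z * (A - B * Kz) + Q + Kzᵀ * R * Kz = Z)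
    (lam : ℂ) (v : Fin n → ℂ) (hv : v ≠ 0) (hlam : ‖lam‖ = 1)
    (heig : ((A - B * Kz).map Complex.ofReal).mulVec v = lam • v) :
    ((Kz - Ks).map Complex.ofReal).mulVec v = 0 ∧
    ((A - B * Ks).map Complex.ofReal).mulVec v = lam • v ∧
    False := by
  have hKv := mulVec_map_ofReal_eq_zero_of_lyapunov hPs
    (lyapunov_sub_eq_of_stationary hXs hR hLyaps hLyapz hNs) hlam heig
  have hAs : (A - B * Ks).map Complex.ofReal *ᵥ v = lam • v := by
    rw [show A - B * Ks = (A - B * Kz) + B * (Kz - Ks) by rw [Matrix.mul_sub]; abel,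
      Matrix.map_add _ Complex.ofReal_add, map_ofReal_mul, add_mulVec, heig, ← mulVec_mulVec, hKv,
      mulVec_zero, add_zero]
  exact ⟨hKv, hAs, (hSs.norm_lt_one_of_mulVec_eq_smul hv hAs).ne hlam⟩

/-- No eigenvalue of `A − BK_ζ` lies on the unit circle when `K_ζ` admits a
symmetric Lyapunov solution `Z ⪰ X_*` and `K_*` is a stabilizing stationary gain with
`R + BᵀX_*B ≻ 0`.  If `(λ, v)` were such a unit-modulus eigenpair, then `(K_ζ − K_*)v = 0`,
hence `(A − BK_*)v = λ v`, contradicting that `A − BK_*` is Schur. -/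
theorem stmt9 {n m : ℕ} (A : Matrix (Fin n) (Fin n) ℝ) (B : Matrix (Fin n) (Fin m) ℝ)
    (Q : Matrix (Fin n) (Fin n) ℝ) (R : Matrix (Fin m) (Fin m) ℝ)
    (hQ : Qᵀ = Q) (hR : Rᵀ = R)
    (Ks Kz : Matrix (Fin m) (Fin n) ℝ) (Xs Z : Matrix (Fin n) (Fin n) ℝ)
    (hXs : Xsᵀ = Xs) (hSs : IsSchur (A - B * Ks))
    (hLyaps : (A - B * Ks)ᵀ * Xs * (A - B * Ks) + Q + Ksᵀ * R * Ks = Xs)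
    (hNs : R * Ks - Bᵀ * Xs * (A - B * Ks) = 0)
    (hPs : (R + Bᵀ * Xs * B).PosDef)
    (hZ : Zᵀ = Z)
    (hLyapz : (A - B * Kz)ᵀ * Z * (A - B * Kz) + Q + Kzᵀ * R * Kz = Z)
    (hZXs : (Z - Xs).PosSemidef)
    (lam : ℂ) (v : Fin n → ℂ) (hv : v ≠ 0) (hlam : ‖lam‖ = 1)
    (heig : ((A - B * Kz).map Complex.ofReal).mulVec v = lam • v) :
    ((Kz - Ks).map Complex.ofReal).mulVec v = 0 ∧
    ((A - B * Ks).map Complex.ofReal).mulVec v = lam • v ∧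
    False :=
  stmt9_general A B Q R hR Ks Kz Xs Z hXs hSs hLyaps hNs hPs hLyapz lam v hv hlam heig
end

section
/- Marginal non-observability gives finite cost: let K be a gain such that A − BK has spectral radius 1, and suppose every eigenvalue λ of A − BK with |λ| = 1 fails to be (Q + KᵀRK, A − BK)-observable in the strong sense that its generalized eigenspace is contained in the kernel of ∑_{j=0}^{k}((A−BK)ᵀ)^j(Q+KᵀRK)(A−BK)^j for all k. Then for every initial vector ω, the series ∑_{j=0}^∞ ωᵀ((A−BK)ᵀ)^j (Q + KᵀRK)(A−BK)^j ω converges to a finite real number, provided all eigenvalues of modulus < 1 account for the remaining dynamics (i.e., A − BK restricted to the complement of the unit-modulus generalized eigenspaces is Schur). -/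
open Matrix
open scoped ENNReal

/-!
Over `ℂ`, the state space is the sum of the generalized eigenspaces of `M = A - BK`. Consecutive
partial sums differ by one term, so the hypothesis puts every generalized eigenvector of a
unit-modulus eigenvalue in the kernel of each term `Tⱼ = (Mᵀ)ʲ C Mʲ`, where `C = Q + KᵀRK`.
Since `Tⱼ` is symmetric, the cost of `ω` is then the cost of its component `s` in the
generalized eigenspaces of eigenvalues of modulus `< 1`, and the `j`-th term is
`(Mʲ s) ⬝ C (Mʲ s) = O(‖Mʲ s‖²)`. On such a generalized eigenspace
`M^(j+1) v = μ Mʲ v + Mʲ ((M - μ) v)`, so induction on the nilpotency order of `M - μ` makes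
`‖Mʲ v‖` summable.
-/

open Finset

theorem summable_of_succ_le_mul_add {a b : ℕ → ℝ} {t : ℝ} (ha : ∀ j, 0 ≤ a j) (hb : ∀ j, 0 ≤ b j)
    (ht : t < 1) (hbs : Summable b) (h : ∀ j, a (j + 1) ≤ t * a j + b j) : Summable a := by
  refine summable_of_sum_range_le ha (c := (a 0 + ∑' j, b j) / (1 - t)) fun N => ?_
  have hstep : ∑ j ∈ range (N + 1), a j ≤ a 0 + t * ∑ j ∈ range N, a j + ∑' j, b j := by
    rw [sum_range_succ', mul_sum, add_comm (∑ j ∈ range N, a (j + 1))]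
    have := sum_le_sum fun j (_ : j ∈ range N) => h j
    rw [sum_add_distrib] at this
    linarith [hbs.sum_le_tsum (range N) fun j _ => hb j]
  have hmono : ∑ j ∈ range N, a j ≤ ∑ j ∈ range (N + 1), a j := by
    rw [sum_range_succ]; linarith [ha N]
  rw [le_div_iff₀ (by linarith)]
  linarith

namespace Module.End

variable {𝕜 E : Type*} [NormedField 𝕜] [SeminormedAddCommGroup E] [NormedSpace 𝕜 E]

def absSummableOrbits (f : Module.End 𝕜 E) : Submodule 𝕜 E where
  carrier := {v | Summable fun j => ‖(f ^ j) v‖}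
  zero_mem' := by simp
  add_mem' {v w} hv hw := by
    refine (hv.add hw).of_nonneg_of_le (fun _ => norm_nonneg _) fun j => ?_
    simpa only [map_add] using norm_add_le _ _
  smul_mem' c v hv := by
    simpa only [Set.mem_ofPred_eq, map_smul, norm_smul] using hv.mul_left ‖c‖

theorem mem_absSummableOrbits {f : Module.End 𝕜 E} {v : E} :
    v ∈ f.absSummableOrbits ↔ Summable fun j => ‖(f ^ j) v‖ := Iff.rfl

theorem maxGenEigenspace_le_absSummableOrbits (f : Module.End 𝕜 E) {μ : 𝕜} (hμ : ‖μ‖ < 1) :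
    f.maxGenEigenspace μ ≤ f.absSummableOrbits := by
  intro v hv
  obtain ⟨k, hk⟩ := (f.mem_maxGenEigenspace μ v).1 hv
  clear hv
  induction k generalizing v with
  | zero => simp_all
  | succ k ih =>
    set w := (f - μ • 1) v
    have hw : Summable fun j => ‖(f ^ j) w‖ := ih (by rwa [pow_succ, mul_apply] at hk)
    refine summable_of_succ_le_mul_add (fun _ => norm_nonneg _) (fun _ => norm_nonneg _) hμ hw
      fun j => ?_
    have hfv : f v = μ • v + w := by simp [w]
    calc ‖(f ^ (j + 1)) v‖ = ‖μ • (f ^ j) v + (f ^ j) w‖ := by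
          rw [pow_succ, mul_apply, hfv, map_add, map_smul]
      _ ≤ ‖μ‖ * ‖(f ^ j) v‖ + ‖(f ^ j) w‖ := (norm_add_le _ _).trans (by rw [norm_smul])

theorem eq_top_of_maxGenEigenspace_le {K V : Type*} [Field K] [IsAlgClosed K]
    [AddCommGroup V] [Module K V] [FiniteDimensional K V] (f : Module.End K V)
    {W : Submodule K V} (h : ∀ μ, f.HasEigenvalue μ → f.maxGenEigenspace μ ≤ W) : W = ⊤ := by
  rw [eq_top_iff, ← f.iSup_maxGenEigenspace_eq_top]
  refine iSup_le fun μ => ?_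
  by_cases hμ : f.maxGenEigenspace μ = ⊥
  · simp [hμ]
  · exact h μ ((hasUnifEigenvalue_iff_hasUnifEigenvalue_one WithTop.top_pos).1 hμ)

end Module.End

theorem eq_zero_of_sum_range_succ_eq_zero {G : Type*} [AddCommGroup G] {g : ℕ → G}
    (h : ∀ k, ∑ j ∈ range (k + 1), g j = 0) (j : ℕ) : g j = 0 := by
  cases j with
  | zero => simpa using h 0
  | succ j => simpa [sum_range_succ _ (j + 1), h j] using h (j + 1)

theorem Summable.sq_of_norm {E : Type*} [SeminormedAddCommGroup E] {x : ℕ → E}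
    (h : Summable fun j => ‖x j‖) : Summable fun j => ‖x j‖ ^ 2 := by
  refine (h.mul_left (∑' i, ‖x i‖)).of_nonneg_of_le (fun _ => by positivity) fun j => ?_
  rw [sq]
  exact mul_le_mul_of_nonneg_right (h.le_tsum j fun _ _ => norm_nonneg _) (norm_nonneg _)

namespace Matrix

variable {ι : Type*} [Fintype ι]

theorem dotProduct_mulVec_add_of_mulVec_eq_zero {R : Type*} [CommSemiring R] {T : Matrix ι ι R}
    (hT : Tᵀ = T) {u : ι → R} (hu : T *ᵥ u = 0) (s : ι → R) :
    (u + s) ⬝ᵥ T *ᵥ (u + s) = s ⬝ᵥ T *ᵥ s := by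
  rw [mulVec_add, hu, zero_add, add_dotProduct, dotProduct_mulVec u, ← mulVec_transpose, hT, hu,
    zero_dotProduct, zero_add]

theorem dotProduct_transpose_mul_mul_mulVec {R : Type*} [CommSemiring R] (P C : Matrix ι ι R)
    (s : ι → R) : s ⬝ᵥ (Pᵀ * C * P) *ᵥ s = (P *ᵥ s) ⬝ᵥ C *ᵥ (P *ᵥ s) := by
  rw [← mulVec_mulVec, ← mulVec_mulVec, dotProduct_mulVec, vecMul_transpose]

variable {𝕜 : Type*} [SeminormedRing 𝕜]

theorem norm_dotProduct_le (x y : ι → 𝕜) : ‖x ⬝ᵥ y‖ ≤ Fintype.card ι * (‖x‖ * ‖y‖) := by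
  calc ‖x ⬝ᵥ y‖ ≤ ∑ _i : ι, ‖x‖ * ‖y‖ := norm_sum_le_of_le univ fun i _ =>
        (norm_mul_le _ _).trans (mul_le_mul (norm_le_pi_norm x i) (norm_le_pi_norm y i)
          (norm_nonneg _) (norm_nonneg _))
    _ = Fintype.card ι * (‖x‖ * ‖y‖) := by simp

theorem exists_norm_dotProduct_mulVec_self_le (C : Matrix ι ι 𝕜) :
    ∃ c, ∀ x : ι → 𝕜, ‖x ⬝ᵥ C *ᵥ x‖ ≤ c * ‖x‖ ^ 2 := by
  let := Matrix.linftyOpSeminormedAddCommGroup (m := ι) (n := ι) (α := 𝕜)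
  refine ⟨Fintype.card ι * ‖C‖, fun x => (norm_dotProduct_le x _).trans ?_⟩
  have := linfty_opNorm_mulVec C x
  calc (Fintype.card ι : ℝ) * (‖x‖ * ‖C *ᵥ x‖) ≤ Fintype.card ι * (‖x‖ * (‖C‖ * ‖x‖)) := by
        gcongr
    _ = Fintype.card ι * ‖C‖ * ‖x‖ ^ 2 := by ring

theorem summable_norm_dotProduct_mulVec_self (C : Matrix ι ι 𝕜) {x : ℕ → ι → 𝕜}
    (hx : Summable fun j => ‖x j‖) : Summable fun j => ‖x j ⬝ᵥ C *ᵥ x j‖ := by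
  obtain ⟨c, hc⟩ := exists_norm_dotProduct_mulVec_self_le C
  exact ((hx.sq_of_norm).mul_left c).of_nonneg_of_le (fun _ => norm_nonneg _) fun j => hc (x j)

end Matrix

theorem RingHom.map_dotProduct_mulVec {ι R S : Type*} [Fintype ι] [CommSemiring R]
    [CommSemiring S]    (φ : R →+* S) (v w : ι → R) (T : Matrix ι ι R) :
    φ (v ⬝ᵥ T *ᵥ w) = (φ ∘ v) ⬝ᵥ T.map φ *ᵥ (φ ∘ w) := by
  rw [φ.map_dotProduct]
  congr 1
  funext i
  exact φ.map_mulVec T w i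

theorem Matrix.toLinAlgEquiv'_sub_smul_one_pow_apply {ι R : Type*} [Fintype ι] [DecidableEq ι]
    [CommRing R] (M : Matrix ι ι R) (μ : R) (k : ℕ) (v : ι → R) :
    ((toLinAlgEquiv' M - μ • 1) ^ k) v = ((M - μ • 1) ^ k) *ᵥ v := by
  rw [← toLinAlgEquiv'_apply, map_pow, map_sub, map_smul, map_one]

theorem summable_norm_cost_of_unit_modes_unobservable {ι : Type*} [Fintype ι] [DecidableEq ι]
    {M C : Matrix ι ι ℂ} (hC : Cᵀ = C) (hbound : ∀ μ ∈ spectrum ℂ M, ‖μ‖ ≤ 1)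
    (hker : ∀ μ ∈ spectrum ℂ M, ‖μ‖ = 1 → ∀ v, (∃ k : ℕ, ((M - μ • 1) ^ k) *ᵥ v = 0) →
      ∀ j : ℕ, (Mᵀ ^ j * C * M ^ j) *ᵥ v = 0)
    (w : ι → ℂ) : Summable fun j => ‖w ⬝ᵥ (Mᵀ ^ j * C * M ^ j) *ᵥ w‖ := by
  set f : Module.End ℂ (ι → ℂ) := toLinAlgEquiv' M
  set Z : Submodule ℂ (ι → ℂ) := ⨅ j, LinearMap.ker (Mᵀ ^ j * C * M ^ j).mulVecLin
  have hmemZ (v : ι → ℂ) : v ∈ Z ↔ ∀ j : ℕ, (Mᵀ ^ j * C * M ^ j) *ᵥ v = 0 := by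
    simp only [Z, Submodule.mem_iInf, LinearMap.mem_ker, mulVecLin_apply]
  have hcover : Z ⊔ f.absSummableOrbits = ⊤ := f.eq_top_of_maxGenEigenspace_le fun μ hμ => by
    have hμM : μ ∈ spectrum ℂ M := by
      rw [← AlgEquiv.spectrum_eq toLinAlgEquiv' M]
      exact hμ.mem_spectrum
    rcases (hbound μ hμM).eq_or_lt with hunit | hstable
    · refine le_sup_of_le_left fun v hv => ?_
      obtain ⟨k, hk⟩ := (f.mem_maxGenEigenspace μ v).1 hv
      rw [toLinAlgEquiv'_sub_smul_one_pow_apply] at hk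
      exact (hmemZ v).2 (hker μ hμM hunit v ⟨k, hk⟩)
    · exact le_sup_of_le_right (f.maxGenEigenspace_le_absSummableOrbits hstable)
  obtain ⟨u, hu, s, hs, rfl⟩ := Submodule.mem_sup.1 (hcover ▸ Submodule.mem_top (x := w))
  have hTu := (hmemZ u).1 hu
  have hsym (j : ℕ) : (Mᵀ ^ j * C * M ^ j)ᵀ = Mᵀ ^ j * C * M ^ j := by
    simp [transpose_mul, ← transpose_pow, hC, Matrix.mul_assoc]
  simp_rw [dotProduct_mulVec_add_of_mulVec_eq_zero (hsym _) (hTu _), ← transpose_pow,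
    dotProduct_transpose_mul_mul_mulVec]
  refine summable_norm_dotProduct_mulVec_self C ?_
  simpa only [f, Module.End.mem_absSummableOrbits, ← map_pow, toLinAlgEquiv'_apply] using hs

theorem stmt19_general {n m : ℕ} (A : Matrix (Fin n) (Fin n) ℝ) (B : Matrix (Fin n) (Fin m) ℝ)
    (Q : Matrix (Fin n) (Fin n) ℝ) (R : Matrix (Fin m) (Fin m) ℝ)
    (hQ : Qᵀ = Q) (hR : Rᵀ = R)
    (K : Matrix (Fin m) (Fin n) ℝ)
    (hbound : ∀ lam ∈ spectrum ℂ ((A - B * K).map Complex.ofReal), ‖lam‖ ≤ 1)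
    (hobs : ∀ lam ∈ spectrum ℂ ((A - B * K).map Complex.ofReal), ‖lam‖ = 1 →
      ∀ v : Fin n → ℂ,
        (∃ k : ℕ, (((A - B * K).map Complex.ofReal - lam • 1) ^ k).mulVec v = 0) →
        ∀ k : ℕ,
          ((∑ j ∈ Finset.range (k + 1),
              (((A - B * K).map Complex.ofReal)ᵀ) ^ j
                * ((Q + Kᵀ * R * K).map Complex.ofReal)
                * ((A - B * K).map Complex.ofReal) ^ j)).mulVec v = 0) :
    ∀ ω : Fin n → ℝ, ∃ L : ℝ,
      HasSum (fun j : ℕ =>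
        ω ⬝ᵥ (((A - B * K)ᵀ) ^ j * (Q + Kᵀ * R * K) * (A - B * K) ^ j).mulVec ω) L := by
  intro ω
  have hC : (Q + Kᵀ * R * K)ᵀ = Q + Kᵀ * R * K := by
    rw [transpose_add, transpose_mul, transpose_mul, transpose_transpose, hQ, hR, Matrix.mul_assoc]
  have hker := fun μ hμ hunit v hv =>
    eq_zero_of_sum_range_succ_eq_zero (by simpa only [sum_mulVec] using hobs μ hμ hunit v hv)
  have hsum := summable_norm_cost_of_unit_modes_unobservable
    (by rw [← transpose_map, hC]) hbound hker (Complex.ofReal ∘ ω)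
  refine ⟨_, (Summable.of_norm (hsum.congr fun j => ?_)).hasSum⟩
  rw [← Complex.norm_real, ← Complex.ofRealHom_eq_coe, Complex.ofRealHom.map_dotProduct_mulVec,
    Matrix.map_mul, Matrix.map_mul, Matrix.map_pow, Matrix.map_pow, ← transpose_map]
  rfl

/-- Marginal non-observability gives finite cost: if `ρ(A − BK) = 1`, all
eigenvalues of `A − BK` have modulus `≤ 1`, and every generalized eigenvector associated with a
unit-modulus eigenvalue is annihilated by all partial sums
`∑_{j=0}^{k}(A_Kᵀ)^j(Q + KᵀRK)A_K^j`, then for every initial vector `ω` the infinite-horizon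
cost series converges to a finite real number. -/
theorem stmt19 {n m : ℕ} (A : Matrix (Fin n) (Fin n) ℝ) (B : Matrix (Fin n) (Fin m) ℝ)
    (Q : Matrix (Fin n) (Fin n) ℝ) (R : Matrix (Fin m) (Fin m) ℝ)
    (hQ : Qᵀ = Q) (hR : Rᵀ = R)
    (K : Matrix (Fin m) (Fin n) ℝ)
    (hρ : specRad (A - B * K) = 1)
    (hbound : ∀ lam ∈ spectrum ℂ ((A - B * K).map Complex.ofReal), ‖lam‖ ≤ 1)
    (hobs : ∀ lam ∈ spectrum ℂ ((A - B * K).map Complex.ofReal), ‖lam‖ = 1 →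
      ∀ v : Fin n → ℂ,
        (∃ k : ℕ, (((A - B * K).map Complex.ofReal - lam • 1) ^ k).mulVec v = 0) →
        ∀ k : ℕ,
          ((∑ j ∈ Finset.range (k + 1),
              (((A - B * K).map Complex.ofReal)ᵀ) ^ j
                * ((Q + Kᵀ * R * K).map Complex.ofReal)
                * ((A - B * K).map Complex.ofReal) ^ j)).mulVec v = 0) :
    ∀ ω : Fin n → ℝ, ∃ L : ℝ,
      HasSum (fun j : ℕ =>
        ω ⬝ᵥ (((A - B * K)ᵀ) ^ j * (Q + Kᵀ * R * K) * (A - B * K) ^ j).mulVec ω) L :=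
  stmt19_general A B Q R hQ hR K hbound hobs
end
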